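/- Under misère play, the losing paths for conjunctive compound Node-Kayles are exactly P_1 and P_2; i.e., P_n is a P-position if and only if n ∈ {1, 2}. -/

import Mathlib

/-- The options of a single path `P n` in Node-Kayles, each given as a multiset of
resulting path lengths.  A resulting empty path is recorded as `0`, which marks an
ended component.  `P 1` and `P 2` only move to the (ended) empty path. -/
def pathOptions (n : ℕ) : Set (Multiset ℕ) :=
  if n = 0 then ∅
  else if n ≤ 2 then {({0} : Multiset ℕ)}
  else {({n - 2} : Multiset ℕ), ({n - 3} : Multiset ℕ)} ∪
    {m | ∃ i j : ℕ, 1 ≤ i ∧ i ≤ j ∧ i + j = n - 3 ∧ m = ({i, j} : Multiset ℕ)}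

/-- A conjunctive move: play one Node-Kayles move simultaneously in every component. -/
inductive ConjMove : Multiset ℕ → Multiset ℕ → Prop
  | single {n : ℕ} {h : Multiset ℕ} : h ∈ pathOptions n → ConjMove {n} h
  | cons {n : ℕ} {h G H : Multiset ℕ} :
      h ∈ pathOptions n → ConjMove G H → ConjMove (n ::ₘ G) (h + H)

/-- A position is ended (for the short ending rule) when it is empty or
some component has ended. -/
def Ended (G : Multiset ℕ) : Prop := G = 0 ∨ 0 ∈ G

/-!
`P 1` and `P 2` can only move to an ended position, so their remoteness is `1`, and so is that
of `P 1 + P m`: every conjunctive move ends its `P 1` component. For `n ≥ 3` the path `P n`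
reaches a position of remoteness `1`, namely `P (n - 2)` when `n ≤ 4` and, by playing the third
vertex, `P 1 + P (n - 4)` otherwise; hence its remoteness is `2`. Finally `P 0` is ended.
-/

lemma ConjMove.ne_zero {G H : Multiset ℕ} (h : ConjMove G H) : G ≠ 0 := by
  cases h <;> simp

lemma conjMove_singleton_iff {n : ℕ} {H : Multiset ℕ} :
    ConjMove {n} H ↔ H ∈ pathOptions n := by
  refine ⟨fun h => ?_, ConjMove.single⟩
  generalize hG : ({n} : Multiset ℕ) = G at h
  cases h with
  | single hH => rwa [Multiset.singleton_inj.1 hG]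
  | @cons _ _ G _ _ hmove =>
    have hcard := congrArg Multiset.card hG
    rw [Multiset.card_singleton, Multiset.card_cons] at hcard
    exact absurd (Multiset.card_eq_zero.1 (by omega)) hmove.ne_zero

lemma pathOptions_of_pos_of_le_two {n : ℕ} (h0 : n ≠ 0) (h2 : n ≤ 2) :
    pathOptions n = {({0} : Multiset ℕ)} := by
  simp [pathOptions, h0, h2]

lemma pathOptions_nonempty {n : ℕ} (h0 : n ≠ 0) : (pathOptions n).Nonempty := by
  by_cases h2 : n ≤ 2
  · exact ⟨{0}, by simp [pathOptions_of_pos_of_le_two h0 h2]⟩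
  · exact ⟨{n - 2}, by simp [pathOptions, h0, h2]⟩

lemma ConjMove.zero_mem_of_one_mem {G H : Multiset ℕ} (h : ConjMove G H) (h1 : 1 ∈ G) :
    0 ∈ H := by
  induction h with
  | single hH =>
    obtain rfl := Multiset.mem_singleton.1 h1
    rw [pathOptions_of_pos_of_le_two one_ne_zero one_le_two] at hH
    simp [Set.mem_singleton_iff.1 hH]
  | cons hh _ ih =>
    rcases Multiset.mem_cons.1 h1 with rfl | h1
    · rw [pathOptions_of_pos_of_le_two one_ne_zero one_le_two] at hh
      simp [Set.mem_singleton_iff.1 hh]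
    · exact Multiset.mem_add.2 (Or.inr (ih h1))

lemma not_ended_singleton {n : ℕ} (h0 : n ≠ 0) : ¬ Ended {n} := by
  rintro (h | h) <;> simp_all [eq_comm]

section Remoteness

variable (R : Multiset ℕ → ℕ)
    (hend : ∀ G, Ended G → R G = 0)
    (hodd : ∀ G, ¬ Ended G → (∃ H, ConjMove G H ∧ Odd (R H)) →
      R G = 1 + sInf {r | Odd r ∧ ∃ H, ConjMove G H ∧ R H = r})
    (heven : ∀ G, ¬ Ended G → ¬ (∃ H, ConjMove G H ∧ Odd (R H)) →
      R G = 1 + sSup {r | Even r ∧ ∃ H, ConjMove G H ∧ R H = r})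

include heven in
lemma remoteness_eq_one_of_forall_conjMove {G : Multiset ℕ} (hG : ¬ Ended G)
    (hmove : ∃ H, ConjMove G H) (hall : ∀ H, ConjMove G H → R H = 0) : R G = 1 := by
  have hno_odd : ¬ ∃ H, ConjMove G H ∧ Odd (R H) := by
    rintro ⟨H, hH, hRH⟩
    simp [hall H hH] at hRH
  have hvalues : {r | Even r ∧ ∃ H, ConjMove G H ∧ R H = r} = {0} := by
    ext r
    constructor
    · rintro ⟨-, H, hH, rfl⟩
      exact hall H hH
    · rintro rfl
      obtain ⟨H, hH⟩ := hmove
      exact ⟨Even.zero, H, hH, hall H hH⟩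
  rw [heven G hG hno_odd, hvalues, csSup_singleton]

include hodd in
lemma remoteness_eq_two_of_conjMove {G H : Multiset ℕ} (hG : ¬ Ended G) (hH : ConjMove G H)
    (hRH : R H = 1) : R G = 2 := by
  set S := {r | Odd r ∧ ∃ H, ConjMove G H ∧ R H = r}
  have h1 : 1 ∈ S := ⟨odd_one, H, hH, hRH⟩
  have hinf_odd : Odd (sInf S) := (Nat.sInf_mem ⟨1, h1⟩).1
  have hinf_le : sInf S ≤ 1 := Nat.sInf_le h1
  have hinf : sInf S = 1 := by
    obtain ⟨k, hk⟩ := hinf_odd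
    omega
  rw [hodd G hG ⟨H, hH, hRH ▸ odd_one⟩, hinf]

include hend heven in
lemma remoteness_singleton_of_le_two {n : ℕ} (h0 : n ≠ 0) (h2 : n ≤ 2) : R {n} = 1 := by
  have hopt := pathOptions_of_pos_of_le_two h0 h2
  refine remoteness_eq_one_of_forall_conjMove R heven (not_ended_singleton h0)
    ⟨{0}, conjMove_singleton_iff.2 (by simp [hopt])⟩ fun H hH => hend H (Or.inr ?_)
  rw [conjMove_singleton_iff, hopt, Set.mem_singleton_iff] at hH
  simp [hH]

include hend heven in
lemma remoteness_one_pair {m : ℕ} (hm : m ≠ 0) : R {1, m} = 1 := by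
  have hG : ¬ Ended ({1, m} : Multiset ℕ) := by
    rintro (h | h)
    · simp [Multiset.insert_eq_cons] at h
    · simp_all [eq_comm]
  obtain ⟨h, hh⟩ := pathOptions_nonempty hm
  refine remoteness_eq_one_of_forall_conjMove R heven hG
    ⟨{0} + h, ConjMove.cons (by simp [pathOptions_of_pos_of_le_two]) (ConjMove.single hh)⟩
    fun H hH => hend H (Or.inr (hH.zero_mem_of_one_mem (by simp)))

include hend hodd heven in
lemma remoteness_singleton_of_three_le {n : ℕ} (hn : 3 ≤ n) : R {n} = 2 := by
  have hn0 : n ≠ 0 := by omega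
  have hn2 : ¬ n ≤ 2 := by omega
  obtain ⟨H, hH, hRH⟩ : ∃ H, ConjMove {n} H ∧ R H = 1 := by
    by_cases h4 : n ≤ 4
    · refine ⟨{n - 2}, conjMove_singleton_iff.2 ?_,
        remoteness_singleton_of_le_two R hend heven (by omega) (by omega)⟩
      simp [pathOptions, hn0, hn2]
    · refine ⟨{1, n - 4}, conjMove_singleton_iff.2 ?_, remoteness_one_pair R hend heven (by omega)⟩
      simp only [pathOptions, if_neg hn0, if_neg hn2]
      exact Or.inr ⟨1, n - 4, le_rfl, by omega, by omega, rfl⟩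
  exact remoteness_eq_two_of_conjMove R hodd (not_ended_singleton hn0) hH hRH

end Remoteness

theorem conjunctive_losing_paths_misere (R : Multiset ℕ → ℕ)
    (hend : ∀ G, Ended G → R G = 0)
    (hodd : ∀ G, ¬ Ended G → (∃ H, ConjMove G H ∧ Odd (R H)) →
      R G = 1 + sInf {r | Odd r ∧ ∃ H, ConjMove G H ∧ R H = r})
    (heven : ∀ G, ¬ Ended G → ¬ (∃ H, ConjMove G H ∧ Odd (R H)) →
      R G = 1 + sSup {r | Even r ∧ ∃ H, ConjMove G H ∧ R H = r}) :
    ∀ n : ℕ, Odd (R {n}) ↔ n = 1 ∨ n = 2 := by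
  intro n
  rcases Nat.lt_or_ge n 3 with hn | hn
  · obtain rfl | hn0 := eq_or_ne n 0
    · rw [hend {0} (Or.inr (Multiset.mem_singleton_self 0))]
      exact iff_of_false (by decide) (by omega)
    · rw [remoteness_singleton_of_le_two R hend heven hn0 (by omega)]
      exact iff_of_true odd_one (by omega)
  · rw [remoteness_singleton_of_three_le R hend hodd heven hn]
    exact iff_of_false (by decide) (by omega)
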